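/- If 𝓔 is a finite set of base-locations of the dotted triple-graph DT(G) such that ε_i ∩ ε_j = ∅ for all distinct i, j ∈ 𝓔, then 𝓔 is independently colourable (ICL): for every choice, for each l ∈ 𝓔, of a local-colouring of the set F_l, there exists a single trap-colouring of DT(G) whose restriction to each F_l equals the chosen local-colouring. -/

import Mathlib

open SimpleGraph

inductive Colour : Type
  | white | black | green | red
  deriving DecidableEq

variable {V : Type*}

/-- The triple graph `T(G)`: vertex set `V × Fin 3`, with all nine edges between
`P_u = {u} × Fin 3` and `P_v = {v} × Fin 3` for each edge `{u,v}` of `G`. -/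
def tripleGraph (G : SimpleGraph V) : SimpleGraph (V × Fin 3) where
  Adj p q := G.Adj p.1 q.1
  symm := ⟨fun _ _ h => G.adj_symm h⟩
  loopless := ⟨fun _ h => G.irrefl h⟩

instance (G : SimpleGraph V) [DecidableRel G.Adj] : DecidableRel (tripleGraph G).Adj :=
  fun p q => inferInstanceAs (Decidable (G.Adj p.1 q.1))

/-- The dotting operator `D`: subdivide every edge of `H`. Vertices are
`W ⊕ H.edgeSet`: primary vertices are `Sum.inl`, added vertices are `Sum.inr`. -/
def dotted {W : Type*} (H : SimpleGraph W) : SimpleGraph (W ⊕ H.edgeSet) where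
  Adj x y :=
    (∃ (w : W) (e : H.edgeSet), x = Sum.inl w ∧ y = Sum.inr e ∧ w ∈ (e : Sym2 W)) ∨
    (∃ (w : W) (e : H.edgeSet), x = Sum.inr e ∧ y = Sum.inl w ∧ w ∈ (e : Sym2 W))
  symm := by
    constructor
    rintro x y (⟨w, e, rfl, rfl, h⟩ | ⟨w, e, rfl, rfl, h⟩)
    · exact Or.inr ⟨w, e, rfl, rfl, h⟩
    · exact Or.inl ⟨w, e, rfl, rfl, h⟩
  loopless := by
    constructor
    rintro x (⟨w, e, h₁, h₂, -⟩ | ⟨w, e, h₁, h₂, -⟩) <;> subst h₁ <;> simp at h₂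

/-- The dotted triple-graph `DT(G) = D(T(G))`. -/
abbrev dottedTripleGraph (G : SimpleGraph V) :
    SimpleGraph ((V × Fin 3) ⊕ (tripleGraph G).edgeSet) :=
  dotted (tripleGraph G)

/-- A trap-colouring of `DT(G)`. -/
structure TrapColouring (G : SimpleGraph V) where
  colour : (V × Fin 3) ⊕ (tripleGraph G).edgeSet → Colour
  primary_not_red : ∀ p : V × Fin 3, colour (Sum.inl p) ≠ Colour.red
  primary_inj : ∀ v : V, Function.Injective fun i : Fin 3 => colour (Sum.inl (v, i))
  added_rule : ∀ (p q : V × Fin 3) (h : (tripleGraph G).Adj p q),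
    colour (Sum.inr ⟨s(p, q), (SimpleGraph.mem_edgeSet _).mpr h⟩) =
      if colour (Sum.inl p) = colour (Sum.inl q) then colour (Sum.inl p) else Colour.red


/-- A base-location: either a vertex of `G` (primary) or an edge of `G` (added). -/
abbrev BaseLoc (G : SimpleGraph V) := V ⊕ G.edgeSet

/-- `ε_l`: the singleton `{v}` for a primary base-location `v`, and the set of the two
endpoints for an added base-location `e`. -/
def epsSet (G : SimpleGraph V) : BaseLoc G → Set V
  | Sum.inl v => {v}
  | Sum.inr e => {w | w ∈ (e : Sym2 V)}

/-- `F_l`: the set of vertices of `DT(G)` at base-location `l`, i.e. the primary set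
`P_v` or the added set `A_e`. -/
def locSet (G : SimpleGraph V) : BaseLoc G → Set ((V × Fin 3) ⊕ (tripleGraph G).edgeSet)
  | Sum.inl v => {x | ∃ i : Fin 3, x = Sum.inl (v, i)}
  | Sum.inr e => {x | ∃ a : (tripleGraph G).edgeSet,
      Sym2.map Prod.fst (a : Sym2 (V × Fin 3)) = (e : Sym2 V) ∧ x = Sum.inr a}

/-- if `E` is a finite set of base-locations with `ε_i ∩ ε_j = ∅` for all
distinct `i, j ∈ E`, then `E` is independently colourable: any choice of local-colourings
(restrictions of trap-colourings) of the sets `F_l`, `l ∈ E`, is simultaneously realised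
by a single trap-colouring of `DT(G)`. -/
theorem icl_of_disjoint (G : SimpleGraph V) (E : Set (BaseLoc G)) (hE : E.Finite)
    (hdisj : ∀ i ∈ E, ∀ j ∈ E, i ≠ j → epsSet G i ∩ epsSet G j = ∅)
    (loc : ∀ l ∈ E, TrapColouring G) :
    ∃ tc : TrapColouring G, ∀ (l : BaseLoc G) (hl : l ∈ E),
      ∀ x ∈ locSet G l, tc.colour x = (loc l hl).colour x := by
  classical
  -- default palette
  set pal : Fin 3 → Colour := fun i =>
    if i = 0 then Colour.white else if i = 1 then Colour.black else Colour.green with hpal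
  have palinj : Function.Injective pal := by
    intro i j; fin_cases i <;> fin_cases j <;> simp [hpal] <;> decide
  have palnotred : ∀ i, pal i ≠ Colour.red := by
    intro i; fin_cases i <;> simp [hpal]
  -- primary colouring
  set c : V → Fin 3 → Colour := fun v i =>
    if h : ∃ l ∈ E, v ∈ epsSet G l then
      (loc h.choose h.choose_spec.1).colour (Sum.inl (v, i))
    else pal i with hc
  have uniq : ∀ v, ∀ l ∈ E, v ∈ epsSet G l → ∀ l' ∈ E, v ∈ epsSet G l' → l = l' := by
    intro v l hl hv l' hl' hv'
    by_contra hne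
    have h := hdisj l hl l' hl' hne
    have : v ∈ epsSet G l ∩ epsSet G l' := ⟨hv, hv'⟩
    rw [h] at this
    exact this
  have cmatch : ∀ v l (hl : l ∈ E), v ∈ epsSet G l → ∀ i,
      c v i = (loc l hl).colour (Sum.inl (v, i)) := by
    intro v l hl hv i
    have h : ∃ l ∈ E, v ∈ epsSet G l := ⟨l, hl, hv⟩
    have hch : h.choose = l := uniq v h.choose h.choose_spec.1 h.choose_spec.2 l hl hv
    simp only [hc, dif_pos h]
    subst hch
    rfl
  have cinj : ∀ v, Function.Injective (c v) := by
    intro v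
    by_cases h : ∃ l ∈ E, v ∈ epsSet G l
    · simp only [hc, dif_pos h]
      exact (loc h.choose h.choose_spec.1).primary_inj v
    · simp only [hc, dif_neg h]
      exact palinj
  have cnotred : ∀ v i, c v i ≠ Colour.red := by
    intro v i
    by_cases h : ∃ l ∈ E, v ∈ epsSet G l
    · simp only [hc, dif_pos h]
      exact (loc h.choose h.choose_spec.1).primary_not_red _
    · simp only [hc, dif_neg h]
      exact palnotred i
  -- added colouring via Sym2.lift
  set ac : Sym2 (V × Fin 3) → Colour :=
    Sym2.lift ⟨fun p q => if c p.1 p.2 = c q.1 q.2 then c p.1 p.2 else Colour.red, by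
      intro p q
      dsimp only
      split_ifs with h1 h2 h2
      · exact h1
      · exact absurd h1.symm h2
      · exact absurd h2.symm h1
      · rfl⟩ with hac
  refine ⟨⟨fun x => match x with
    | Sum.inl p => c p.1 p.2
    | Sum.inr a => ac a.val, ?_, ?_, ?_⟩, ?_⟩
  · intro p; exact cnotred p.1 p.2
  · intro v i j hij; exact cinj v hij
  · intro p q h
    show ac s(p, q) = _
    simp only [hac, Sym2.lift_mk]
  · intro l hl x hx
    cases l with
    | inl v =>
      obtain ⟨i, rfl⟩ := hx
      exact cmatch v (Sum.inl v) hl rfl i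
    | inr e =>
      obtain ⟨a, hmap, rfl⟩ := hx
      obtain ⟨s, hs⟩ := a
      induction s using Sym2.ind with
      | _ p q =>
        have hadj : (tripleGraph G).Adj p q := hs
        have hmap' : s(p.1, q.1) = (e : Sym2 V) := by
          simpa using hmap
        have hp : p.1 ∈ epsSet G (Sum.inr e) := by
          show p.1 ∈ (e : Sym2 V)
          rw [← hmap']
          exact Sym2.mem_mk_left _ _
        have hq : q.1 ∈ epsSet G (Sum.inr e) := by
          show q.1 ∈ (e : Sym2 V)
          rw [← hmap']
          exact Sym2.mem_mk_right _ _
        have hrule := (loc (Sum.inr e) hl).added_rule p q hadj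
        show ac s(p, q) = _
        rw [hac]
        rw [Sym2.lift_mk]
        show (if c p.1 p.2 = c q.1 q.2 then c p.1 p.2 else Colour.red) = _
        have hcp := cmatch p.1 (Sum.inr e) hl hp p.2
        have hcq := cmatch q.1 (Sum.inr e) hl hq q.2
        rw [hcp, hcq, hrule]
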